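/- arXiv:1802.10274 — 6 statements merged into one kernel-verified Lean document; each statement's English description precedes it below -/
import Mathlib

section
/- The function Φ(y) = (y·ln y − y + 1)/(√y − 1)² (defined for y > 0, y ≠ 1, extended continuously by Φ(1) = 2) satisfies Φ(y) ≥ 1 for all y > 0. -/
/-! With `s = √y`, the numerator minus the denominator is `2 s (s log s - (s - 1))`, which is
nonnegative because `log s ≥ 1 - 1/s`. -/

noncomputable def Phi (y : ℝ) : ℝ :=
  if y = 1 then 2 else (y * Real.log y - y + 1) / (Real.sqrt y - 1) ^ 2

open Real

theorem sqrt_sub_one_sq_le_mul_log_sub_add_one {y : ℝ} (hy : 0 ≤ y) :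
    (√y - 1) ^ 2 ≤ y * log y - y + 1 := by
  set s := √y
  have hs : 0 ≤ s := sqrt_nonneg y
  have hy_eq : y = s ^ 2 := (sq_sqrt hy).symm
  have hlog : log y = 2 * log s := by rw [hy_eq, log_pow]; push_cast; ring
  have key : s - 1 ≤ s * log s := self_sub_one_le_mul_log hs
  rw [hlog, hy_eq]
  nlinarith [mul_le_mul_of_nonneg_left key hs]

theorem Phi_ge_one (y : ℝ) (hy : 0 < y) : Phi y ≥ 1 := by
  unfold Phi
  split_ifs with h
  · norm_num
  · have hne : √y - 1 ≠ 0 := sub_ne_zero.mpr (mt sqrt_eq_one.mp h)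
    have hden : 0 < (√y - 1) ^ 2 := by positivity
    rw [ge_iff_le, one_le_div hden]
    exact sqrt_sub_one_sq_le_mul_log_sub_add_one hy.le
end

section
/- The function Φ(y) = (y·ln y − y + 1)/(√y − 1)² (extended continuously at y = 1 by Φ(1) = 2) is nondecreasing on (0, ∞). -/
/-- The key auxiliary function in the variable `t = √y`. -/
noncomputable def Faux (t : ℝ) : ℝ := (2*t^2*Real.log t - t^2 + 1)/(t-1)^2

lemma G_mono : MonotoneOn (fun t : ℝ => t^2 - 1 - 2*t*Real.log t) (Set.Ioi 0) := by
  have hd : ∀ t ∈ Set.Ioi (0:ℝ),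
      HasDerivAt (fun t : ℝ => t^2 - 1 - 2*t*Real.log t) (2*t - (2*Real.log t + 2)) t := by
    intro t ht
    simp only [Set.mem_Ioi] at ht
    have h1 : HasDerivAt (fun x : ℝ => x^2) (2*t) t := by simpa using hasDerivAt_pow 2 t
    have h2 : HasDerivAt (fun x : ℝ => 2*x*Real.log x) (2*Real.log t + 2) t := by
      have := ((hasDerivAt_id t).const_mul (2:ℝ)).mul (Real.hasDerivAt_log ht.ne')
      refine this.congr_deriv ?_
      field_simp
      simp only [id_eq]
      ring
    exact (h1.sub_const 1).sub h2
  apply monotoneOn_of_deriv_nonneg (convex_Ioi 0)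
  · exact fun t ht => ((hd t ht).continuousAt).continuousWithinAt
  · intro t ht
    rw [interior_Ioi] at ht
    exact ((hd t ht).differentiableAt).differentiableWithinAt
  · intro t ht
    rw [interior_Ioi] at ht
    rw [(hd t ht).deriv]
    have := Real.log_le_sub_one_of_pos ht
    linarith

lemma G_le {t : ℝ} (ht : 0 < t) (ht1 : t ≤ 1) : t^2 - 1 - 2*t*Real.log t ≤ 0 := by
  have := G_mono (Set.mem_Ioi.mpr ht) (Set.mem_Ioi.mpr one_pos) ht1
  simpa using this

lemma G_ge {t : ℝ} (ht1 : 1 ≤ t) : 0 ≤ t^2 - 1 - 2*t*Real.log t := by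
  have := G_mono (Set.mem_Ioi.mpr one_pos) (Set.mem_Ioi.mpr (lt_of_lt_of_le one_pos ht1)) ht1
  simpa using this

lemma H_mono : MonotoneOn (fun t : ℝ => (t+1)*Real.log t - 2*(t-1)) (Set.Ioi 0) := by
  have hd : ∀ t ∈ Set.Ioi (0:ℝ),
      HasDerivAt (fun t : ℝ => (t+1)*Real.log t - 2*(t-1))
        (Real.log t + (t+1)*t⁻¹ - 2) t := by
    intro t ht
    simp only [Set.mem_Ioi] at ht
    have h1 : HasDerivAt (fun x : ℝ => (x+1)*Real.log x) (Real.log t + (t+1)*t⁻¹) t := by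
      have := ((hasDerivAt_id t).add_const 1).mul (Real.hasDerivAt_log ht.ne')
      refine this.congr_deriv ?_
      simp only [id_eq]
      field_simp [ht.ne']
    have h2 : HasDerivAt (fun x : ℝ => 2*(x-1)) (2:ℝ) t := by
      simpa using ((hasDerivAt_id t).sub_const 1).const_mul (2:ℝ)
    exact h1.sub h2
  apply monotoneOn_of_deriv_nonneg (convex_Ioi 0)
  · exact fun t ht => ((hd t ht).continuousAt).continuousWithinAt
  · intro t ht
    rw [interior_Ioi] at ht
    exact ((hd t ht).differentiableAt).differentiableWithinAt
  · intro t ht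
    rw [interior_Ioi] at ht
    simp only [Set.mem_Ioi] at ht
    rw [(hd t ht).deriv]
    have h1 : Real.log t⁻¹ ≤ t⁻¹ - 1 := Real.log_le_sub_one_of_pos (by positivity)
    rw [Real.log_inv] at h1
    have h2 : (t+1)*t⁻¹ = 1 + t⁻¹ := by field_simp
    rw [h2]
    linarith

lemma H_le {t : ℝ} (ht : 0 < t) (ht1 : t ≤ 1) : (t+1)*Real.log t - 2*(t-1) ≤ 0 := by
  have := H_mono (Set.mem_Ioi.mpr ht) (Set.mem_Ioi.mpr one_pos) ht1
  simpa using this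

lemma H_ge {t : ℝ} (ht1 : 1 ≤ t) : 0 ≤ (t+1)*Real.log t - 2*(t-1) := by
  have := H_mono (Set.mem_Ioi.mpr one_pos) (Set.mem_Ioi.mpr (lt_of_lt_of_le one_pos ht1)) ht1
  simpa using this

lemma Faux_hasDeriv {t : ℝ} (ht : 0 < t) (ht1 : t ≠ 1) :
    HasDerivAt Faux ((2*(t-1)*(t^2 - 1 - 2*t*Real.log t))/((t-1)^2)^2) t := by
  have hden : (t-1)^2 ≠ 0 := pow_ne_zero 2 (sub_ne_zero.mpr ht1)
  have hN : HasDerivAt (fun x : ℝ => 2*x^2*Real.log x - x^2 + 1) (4*t*Real.log t) t := by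
    have h1 : HasDerivAt (fun x : ℝ => 2*x^2*Real.log x) (4*t*Real.log t + 2*t) t := by
      have := ((hasDerivAt_pow 2 t).const_mul (2:ℝ)).mul (Real.hasDerivAt_log ht.ne')
      refine this.congr_deriv ?_
      field_simp
      ring
    have h2 : HasDerivAt (fun x : ℝ => x^2) (2*t) t := by simpa using hasDerivAt_pow 2 t
    simpa using (h1.sub h2).add_const 1
  have hD : HasDerivAt (fun x : ℝ => (x-1)^2) (2*(t-1)) t := by
    have := ((hasDerivAt_id t).sub_const 1).pow 2
    refine this.congr_deriv ?_
    simp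
  have := hN.div hD hden
  refine this.congr_deriv ?_
  field_simp
  ring

lemma Faux_mono_Ioo : MonotoneOn Faux (Set.Ioo 0 1) := by
  apply monotoneOn_of_deriv_nonneg (convex_Ioo 0 1)
  · exact fun t ht => ((Faux_hasDeriv ht.1 ht.2.ne).continuousAt).continuousWithinAt
  · intro t ht
    rw [interior_Ioo] at ht
    exact ((Faux_hasDeriv ht.1 ht.2.ne).differentiableAt).differentiableWithinAt
  · intro t ht
    rw [interior_Ioo] at ht
    simp only [Set.mem_Ioo] at ht
    rw [(Faux_hasDeriv ht.1 ht.2.ne).deriv]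
    apply div_nonneg _ (by positivity)
    have hG := G_le ht.1 ht.2.le
    nlinarith [mul_nonneg (by linarith : (0:ℝ) ≤ 1 - t) (by linarith : (0:ℝ) ≤ -(t^2 - 1 - 2*t*Real.log t))]

lemma Faux_mono_Ioi : MonotoneOn Faux (Set.Ioi 1) := by
  apply monotoneOn_of_deriv_nonneg (convex_Ioi 1)
  · intro t ht
    have ht0 : (0:ℝ) < t := lt_trans one_pos ht
    exact ((Faux_hasDeriv ht0 (ne_of_gt ht)).continuousAt).continuousWithinAt
  · intro t ht
    rw [interior_Ioi] at ht
    exact ((Faux_hasDeriv (lt_trans one_pos ht) (ne_of_gt ht)).differentiableAt).differentiableWithinAt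
  · intro t ht
    rw [interior_Ioi] at ht
    simp only [Set.mem_Ioi] at ht
    rw [(Faux_hasDeriv (lt_trans one_pos ht) (ne_of_gt ht)).deriv]
    apply div_nonneg _ (by positivity)
    have hG := G_ge ht.le
    nlinarith [mul_nonneg (by linarith : (0:ℝ) ≤ t - 1) hG]

lemma Faux_le_two {t : ℝ} (ht : 0 < t) (ht1 : t < 1) : Faux t ≤ 2 := by
  have hden : (0:ℝ) < (t-1)^2 := by
    have h1 : t - 1 ≠ 0 := sub_ne_zero.mpr ht1.ne
    exact lt_of_le_of_ne (sq_nonneg _) (Ne.symm (pow_ne_zero 2 h1))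
  rw [Faux, div_le_iff₀ hden]
  have hH := H_le ht ht1.le
  have key : t^2 * ((t+1)*Real.log t - 2*(t-1)) ≤ 0 :=
    mul_nonpos_of_nonneg_of_nonpos (sq_nonneg t) hH
  have hcube : (0:ℝ) ≤ (1-t)^3 := pow_nonneg (by linarith) 3
  nlinarith [key, hcube, ht, ht1]

lemma Faux_ge_two {t : ℝ} (ht1 : 1 < t) : 2 ≤ Faux t := by
  have hden : (0:ℝ) < (t-1)^2 := by
    have h1 : t - 1 ≠ 0 := sub_ne_zero.mpr (ne_of_gt ht1)
    exact lt_of_le_of_ne (sq_nonneg _) (Ne.symm (pow_ne_zero 2 h1))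
  rw [Faux, le_div_iff₀ hden]
  have hH := H_ge ht1.le
  have key : 0 ≤ t^2 * ((t+1)*Real.log t - 2*(t-1)) :=
    mul_nonneg (sq_nonneg t) hH
  have hcube : (0:ℝ) ≤ (t-1)^3 := pow_nonneg (by linarith) 3
  nlinarith [key, hcube, ht1]

lemma Phi_one : Phi 1 = 2 := if_pos rfl

lemma Phi_eq_Faux {y : ℝ} (hy : 0 < y) (hy1 : y ≠ 1) : Phi y = Faux (Real.sqrt y) := by
  rw [Phi, if_neg hy1, Faux, Real.sq_sqrt hy.le, Real.log_sqrt hy.le]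
  congr 1
  ring

theorem Phi_monotone : MonotoneOn Phi (Set.Ioi (0 : ℝ)) := by
  intro a ha b hb hab
  simp only [Set.mem_Ioi] at ha hb
  rcases eq_or_lt_of_le hab with rfl|hab'
  · exact le_refl _
  have hsab : Real.sqrt a ≤ Real.sqrt b := Real.sqrt_le_sqrt hab
  have hsa : 0 < Real.sqrt a := Real.sqrt_pos.mpr ha
  have hsb : 0 < Real.sqrt b := Real.sqrt_pos.mpr hb
  rcases lt_trichotomy b 1 with hb1|hb1|hb1
  · -- a < b < 1
    have ha1 : a < 1 := hab'.trans hb1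
    rw [Phi_eq_Faux ha ha1.ne, Phi_eq_Faux hb hb1.ne]
    have hsa1 : Real.sqrt a < 1 := by
      rw [show (1:ℝ) = Real.sqrt 1 by simp]
      exact Real.sqrt_lt_sqrt ha.le ha1
    have hsb1 : Real.sqrt b < 1 := by
      rw [show (1:ℝ) = Real.sqrt 1 by simp]
      exact Real.sqrt_lt_sqrt hb.le hb1
    exact Faux_mono_Ioo ⟨hsa, hsa1⟩ ⟨hsb, hsb1⟩ hsab
  · -- b = 1
    subst hb1
    rw [Phi_one]
    have ha1 : a < 1 := hab'
    rw [Phi_eq_Faux ha ha1.ne]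
    have hsa1 : Real.sqrt a < 1 := by
      rw [show (1:ℝ) = Real.sqrt 1 by simp]
      exact Real.sqrt_lt_sqrt ha.le ha1
    exact Faux_le_two hsa hsa1
  · -- b > 1
    have hsb1 : 1 < Real.sqrt b := by
      rw [show (1:ℝ) = Real.sqrt 1 by simp]
      exact Real.sqrt_lt_sqrt zero_le_one hb1
    have h2b : 2 ≤ Phi b := by
      rw [Phi_eq_Faux hb (ne_of_gt hb1)]
      exact Faux_ge_two hsb1
    rcases lt_trichotomy a 1 with ha1|ha1|ha1
    · have hsa1 : Real.sqrt a < 1 := by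
        rw [show (1:ℝ) = Real.sqrt 1 by simp]
        exact Real.sqrt_lt_sqrt ha.le ha1
      have := Faux_le_two hsa hsa1
      rw [Phi_eq_Faux ha ha1.ne]
      linarith
    · subst ha1
      rw [Phi_one]
      exact h2b
    · have hsa1 : 1 < Real.sqrt a := by
        rw [show (1:ℝ) = Real.sqrt 1 by simp]
        exact Real.sqrt_lt_sqrt zero_le_one ha1
      rw [Phi_eq_Faux ha (ne_of_gt ha1), Phi_eq_Faux hb (ne_of_gt hb1)]
      exact Faux_mono_Ioi (Set.mem_Ioi.mpr hsa1) (Set.mem_Ioi.mpr hsb1) hsab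
end

section
/- Let U be a linear subspace of ℝⁿ and a, b ∈ (0,∞)ⁿ. Then there exists a unique μ ∈ U^⊥ such that the vector (a₁ e^{μ₁}, …, aₙ e^{μₙ}) − b belongs to U. -/
open Filter Finset

private lemma feinberg_exp_ge {t : ℝ} (ht : 0 ≤ t) : t ^ 2 / 4 ≤ Real.exp t := by
  have h := Real.add_one_le_exp (t / 2)
  have h2 : Real.exp t = Real.exp (t / 2) * Real.exp (t / 2) := by
    rw [← Real.exp_add]; ring_nf
  nlinarith [Real.exp_pos (t / 2)]

private lemma feinberg_coord_bound {a b t : ℝ} (ha : 0 < a) (hb : 0 < b) :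
    min b 1 * |t| - (b + 1) ^ 2 / a ≤ a * Real.exp t - b * t := by
  have hC : (b + 1) ^ 2 / a * a = (b + 1) ^ 2 := div_mul_cancel₀ _ (ne_of_gt ha)
  have hCpos : 0 ≤ (b + 1) ^ 2 / a := by positivity
  rcases le_or_gt t 0 with h | h
  · rw [abs_of_nonpos h]
    nlinarith [Real.exp_pos t, min_le_left b 1, lt_min hb one_pos,
      mul_nonneg (sub_nonneg.2 (min_le_left b 1)) (neg_nonneg.2 h)]
  · rw [abs_of_pos h]
    have h5 : a * (t ^ 2 / 4) ≤ a * Real.exp t :=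
      mul_le_mul_of_nonneg_left (feinberg_exp_ge h.le) ha.le
    have h6 : min b 1 * t ≤ 1 * t := mul_le_mul_of_nonneg_right (min_le_right _ _) h.le
    nlinarith [sq_nonneg (a * t - 2 * (b + 1))]

/-- Feinberg's lemma (Proposition B.1 in Feinberg 1995). -/
theorem feinberg_lemma (n : ℕ) (U : Submodule ℝ (EuclideanSpace ℝ (Fin n)))
    (a b : EuclideanSpace ℝ (Fin n)) (ha : ∀ i, 0 < a i) (hb : ∀ i, 0 < b i) :
    ∃! μ : EuclideanSpace ℝ (Fin n), μ ∈ Uᗮ ∧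
      ∃ v : EuclideanSpace ℝ (Fin n), (∀ i, v i = a i * Real.exp (μ i) - b i) ∧ v ∈ U := by
  -- Uniqueness part
  have uniq : ∀ μ₁ μ₂ : EuclideanSpace ℝ (Fin n),
      (μ₁ ∈ Uᗮ ∧ ∃ v, (∀ i, v i = a i * Real.exp (μ₁ i) - b i) ∧ v ∈ U) →
      (μ₂ ∈ Uᗮ ∧ ∃ v, (∀ i, v i = a i * Real.exp (μ₂ i) - b i) ∧ v ∈ U) → μ₁ = μ₂ := by
    rintro μ₁ μ₂ ⟨h₁, v₁, hv₁, hv₁U⟩ ⟨h₂, v₂, hv₂, hv₂U⟩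
    have hmem : μ₁ - μ₂ ∈ Uᗮ := sub_mem h₁ h₂
    have hvmem : v₁ - v₂ ∈ U := sub_mem hv₁U hv₂U
    have h0 : (inner ℝ (v₁ - v₂) (μ₁ - μ₂) : ℝ) = 0 :=
      (Submodule.mem_orthogonal U (μ₁ - μ₂)).1 hmem (v₁ - v₂) hvmem
    rw [PiLp.inner_apply] at h0
    have hsum : ∑ i, (μ₁ i - μ₂ i) * (a i * (Real.exp (μ₁ i) - Real.exp (μ₂ i))) = 0 := by
      rw [← h0]
      refine Finset.sum_congr rfl fun i _ => ?_
      have e1 : (v₁ - v₂) i = v₁ i - v₂ i := by simp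
      have e2 : (μ₁ - μ₂) i = μ₁ i - μ₂ i := by simp
      simp only [RCLike.inner_apply, starRingEnd_apply, star_trivial, e1, e2, hv₁ i, hv₂ i]
      ring
    have hterm : ∀ i ∈ Finset.univ (α := Fin n),
        0 ≤ (μ₁ i - μ₂ i) * (a i * (Real.exp (μ₁ i) - Real.exp (μ₂ i))) := by
      intro i _
      rcases le_total (μ₁ i) (μ₂ i) with h | h
      · have he : Real.exp (μ₁ i) ≤ Real.exp (μ₂ i) := Real.exp_le_exp.2 h
        nlinarith [mul_nonneg (sub_nonneg.2 h)
          (mul_nonneg (ha i).le (sub_nonneg.2 he))]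
      · have he : Real.exp (μ₂ i) ≤ Real.exp (μ₁ i) := Real.exp_le_exp.2 h
        nlinarith [mul_nonneg (sub_nonneg.2 h)
          (mul_nonneg (ha i).le (sub_nonneg.2 he))]
    have hzero := (Finset.sum_eq_zero_iff_of_nonneg hterm).1 hsum
    ext i
    by_contra hne
    rcases lt_or_gt_of_ne hne with hlt | hlt
    · have he : Real.exp (μ₁ i) < Real.exp (μ₂ i) := Real.exp_lt_exp.2 hlt
      have := hzero i (Finset.mem_univ i)
      nlinarith [mul_pos (sub_pos.2 hlt) (mul_pos (ha i) (sub_pos.2 he))]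
    · have he : Real.exp (μ₂ i) < Real.exp (μ₁ i) := Real.exp_lt_exp.2 hlt
      have := hzero i (Finset.mem_univ i)
      nlinarith [mul_pos (sub_pos.2 hlt) (mul_pos (ha i) (sub_pos.2 he))]
  rcases Nat.eq_zero_or_pos n with hn | hn
  · subst hn
    refine ⟨0, ⟨Submodule.zero_mem _, 0, fun i => i.elim0, U.zero_mem⟩, ?_⟩
    intro μ' _
    ext i
    exact i.elim0
  -- Existence via minimizing the strictly convex functional F on Uᗮ
  haveI : Nonempty (Fin n) := ⟨⟨0, hn⟩⟩
  set F : EuclideanSpace ℝ (Fin n) → ℝ :=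
    fun μ => ∑ i, (a i * Real.exp (μ i) - b i * μ i) with hF
  have hFcont : Continuous F := by rw [hF]; fun_prop
  set m : ℝ := Finset.univ.inf' Finset.univ_nonempty (fun i => min (b i) 1) with hm
  have hmpos : 0 < m := by
    rw [hm, Finset.lt_inf'_iff]
    exact fun i _ => lt_min (hb i) one_pos
  set C : ℝ := ∑ i, (b i + 1) ^ 2 / a i with hC
  have hlow : ∀ μ : EuclideanSpace ℝ (Fin n), m * ‖μ‖ - C ≤ F μ := by
    intro μ
    have h1 : ∑ i, (min (b i) 1 * |μ i| - (b i + 1) ^ 2 / a i) ≤ F μ :=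
      Finset.sum_le_sum fun i _ => feinberg_coord_bound (ha i) (hb i)
    have h2 : ∑ i, m * |μ i| ≤ ∑ i, min (b i) 1 * |μ i| :=
      Finset.sum_le_sum fun i _ =>
        mul_le_mul_of_nonneg_right (Finset.inf'_le _ (Finset.mem_univ i)) (abs_nonneg _)
    have h3 : ‖μ‖ ≤ ∑ i, |μ i| := by
      rw [EuclideanSpace.norm_eq]
      have h4 : ∑ i, ‖μ i‖ ^ 2 ≤ (∑ i, |μ i|) ^ 2 := by
        simpa [Real.norm_eq_abs] using
          Finset.sum_sq_le_sq_sum_of_nonneg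
            (f := fun i => |μ i|) (s := Finset.univ) (fun i _ => abs_nonneg _)
      calc Real.sqrt (∑ i, ‖μ i‖ ^ 2) ≤ Real.sqrt ((∑ i, |μ i|) ^ 2) := Real.sqrt_le_sqrt h4
        _ = ∑ i, |μ i| := Real.sqrt_sq (Finset.sum_nonneg fun i _ => abs_nonneg _)
    have h5 : m * ‖μ‖ ≤ ∑ i, m * |μ i| := by
      rw [← Finset.mul_sum]
      exact mul_le_mul_of_nonneg_left h3 hmpos.le
    have h6 : ∑ i, (min (b i) 1 * |μ i| - (b i + 1) ^ 2 / a i)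
        = (∑ i, min (b i) 1 * |μ i|) - C := by
      rw [hC, Finset.sum_sub_distrib]
    linarith
  obtain ⟨x₀, hx₀⟩ : ∃ x : Uᗮ, ∀ y : Uᗮ, F x ≤ F y := by
    apply (hFcont.comp continuous_subtype_val).exists_forall_le
    have hnorm : Tendsto (fun x : Uᗮ => ‖(x : EuclideanSpace ℝ (Fin n))‖)
        (cocompact _) atTop := tendsto_norm_cocompact_atTop
    have hbase : Tendsto (fun x : Uᗮ => m * ‖(x : EuclideanSpace ℝ (Fin n))‖ - C)
        (cocompact _) atTop := by
      simpa [sub_eq_add_neg] using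
        tendsto_atTop_add_const_right _ (-C) (hnorm.const_mul_atTop hmpos)
    exact tendsto_atTop_mono (fun x => hlow x) hbase
  set μ : EuclideanSpace ℝ (Fin n) := (x₀ : EuclideanSpace ℝ (Fin n)) with hμdef
  have hμmem : μ ∈ Uᗮ := x₀.2
  have key : ∀ w ∈ Uᗮ, ∑ i, (a i * Real.exp (μ i) - b i) * w i = 0 := by
    intro w hw
    set φ : ℝ → ℝ :=
      fun t => ∑ i, (a i * Real.exp (μ i + t * w i) - b i * (μ i + t * w i)) with hφ
    have hφF : ∀ t, φ t = F (μ + t • w) := by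
      intro t
      rw [hφ, hF]
      refine Finset.sum_congr rfl fun i _ => ?_
      have : (μ + t • w) i = μ i + t * w i := by simp
      rw [this]
    have hmin : IsLocalMin φ 0 := by
      have hall : ∀ t, φ 0 ≤ φ t := by
        intro t
        rw [hφF, hφF]
        have hmem2 : μ + t • w ∈ Uᗮ :=
          Submodule.add_mem _ hμmem (Submodule.smul_mem _ t hw)
        have h := hx₀ ⟨μ + t • w, hmem2⟩
        simpa using h
      exact Filter.Eventually.of_forall hall
    have hder : HasDerivAt φ (∑ i, (a i * Real.exp (μ i) - b i) * w i) 0 := by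
      have h : HasDerivAt φ
          (∑ i, (a i * (Real.exp (μ i + 0 * w i) * w i) - b i * w i)) 0 := by
        rw [hφ]
        apply HasDerivAt.fun_sum
        intro i _
        have h1 : HasDerivAt (fun t : ℝ => μ i + t * w i) (w i) 0 := by
          simpa using ((hasDerivAt_id (0 : ℝ)).mul_const (w i)).const_add (μ i)
        exact (h1.exp.const_mul (a i)).sub (h1.const_mul (b i))
      convert h using 1
      refine Finset.sum_congr rfl fun i _ => ?_
      simp
      ring
    have := hmin.deriv_eq_zero
    rw [hder.deriv] at this
    exact this
  obtain ⟨v, hvdef⟩ : ∃ v : EuclideanSpace ℝ (Fin n),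
      ∀ i, v i = a i * Real.exp (μ i) - b i :=
    ⟨(WithLp.toLp 2 (fun i => a i * Real.exp (μ i) - b i) : EuclideanSpace ℝ (Fin n)), fun i => rfl⟩
  have hvU : v ∈ U := by
    rw [← Submodule.orthogonal_orthogonal U]
    refine (Submodule.mem_orthogonal _ _).2 fun w hw => ?_
    rw [PiLp.inner_apply, ← key w hw]
    refine Finset.sum_congr rfl fun i _ => ?_
    simp only [RCLike.inner_apply, starRingEnd_apply, star_trivial, hvdef i]
  refine ⟨μ, ⟨hμmem, v, hvdef, hvU⟩, ?_⟩
  intro y hy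
  exact uniq y μ hy ⟨hμmem, v, hvdef, hvU⟩
end

section
/- Let μ₁, μ₂, μ₃, η ∈ [−1, ∞) satisfy μ₁, μ₂, η ≥ 0, μ₃ ≤ 0, and c₁(μ₁² + 2μ₁) = c₂(μ₂² + 2μ₂) = c(η² + 2η) = −c₃(μ₃² + 2μ₃) for positive constants c₁, c₂, c₃ with c = c₁ + c₂ + c₃. Then ((1+μ₁)(1+μ₂) − (1+μ₃)(1+η))² ≥ (1/2)(μ₁² + μ₂² + μ₃²). -/
/-!
Since `z ↦ z ^ 2 + 2 * z = (1 + z) ^ 2 - 1` is increasing on `[-1, ∞)` and each of `c₁`, `c₂`, `c₃` is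
at most `c = c₁ + c₂ + c₃`, the common value `c (η ^ 2 + 2 η) ≥ 0` forces `μ₁, μ₂, -μ₃ ≥ η ≥ 0`.
Expanding, `(1 + μ₁)(1 + μ₂) - (1 + μ₃)(1 + η) = (μ₁ - η) + μ₂ + μ₁μ₂ + (-μ₃) + (-μ₃)η` is at least
`(μ₁ - η) + μ₂ + (-μ₃) ≥ 0`, whose square already dominates `(μ₁ ^ 2 + μ₂ ^ 2 + μ₃ ^ 2) / 2`.
-/

section OrderedRing

variable {α : Type*} [CommRing α] [LinearOrder α] [IsStrictOrderedRing α]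

lemma le_of_sq_add_two_mul_le {x y : α} (hy : -1 ≤ y) (h : x ^ 2 + 2 * x ≤ y ^ 2 + 2 * y) :
    x ≤ y := by
  have : |1 + x| ≤ 1 + y := abs_le_of_sq_le_sq (by linear_combination h) (by linarith)
  linarith [le_abs_self (1 + x)]

lemma le_of_mul_eq_add_mul {w r t x : α} (hw : 0 < w) (hr : 0 ≤ r) (ht : 0 ≤ t)
    (h : w * x = (w + r) * t) : t ≤ x :=
  le_of_mul_le_mul_left (by nlinarith [mul_nonneg hr ht]) hw

lemma sub_add_add_le_mul_sub_mul {a b d e : α} (ha : 0 ≤ a) (hb : 0 ≤ b) (hd : d ≤ 0)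
    (he : 0 ≤ e) : (a - e) + b + (-d) ≤ (1 + a) * (1 + b) - (1 + d) * (1 + e) := by
  nlinarith [mul_nonneg ha hb, mul_nonneg (neg_nonneg.2 hd) he]

lemma sq_add_sq_add_sq_le_two_mul_sq {a b d e : α} (he : 0 ≤ e) (ha : e ≤ a) (hb : e ≤ b)
    (hd : e ≤ -d) : a ^ 2 + b ^ 2 + d ^ 2 ≤ 2 * ((a - e) + b + (-d)) ^ 2 := by
  nlinarith [mul_nonneg (sub_nonneg.2 ha) (sub_nonneg.2 hb), mul_nonneg (sub_nonneg.2 ha) he,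
    mul_nonneg (sub_nonneg.2 ha) (he.trans hd), mul_nonneg (sub_nonneg.2 hb) (he.trans hd),
    mul_nonneg he (sub_nonneg.2 hd), mul_nonneg he he, mul_nonneg (he.trans hb) (he.trans hd)]

end OrderedRing

theorem finite_dim_ineq_case1_general (μ₁ μ₂ μ₃ η c₁ c₂ c₃ : ℝ)
    (hμ₁ : -1 ≤ μ₁) (hμ₂ : -1 ≤ μ₂) (h4 : 0 ≤ η) (h3 : μ₃ ≤ 0)
    (hc₁ : 0 < c₁) (hc₂ : 0 < c₂) (hc₃ : 0 < c₃)
    (e1 : c₁ * (μ₁ ^ 2 + 2 * μ₁) = c₂ * (μ₂ ^ 2 + 2 * μ₂))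
    (e2 : c₂ * (μ₂ ^ 2 + 2 * μ₂) = (c₁ + c₂ + c₃) * (η ^ 2 + 2 * η))
    (e3 : (c₁ + c₂ + c₃) * (η ^ 2 + 2 * η) = -(c₃ * (μ₃ ^ 2 + 2 * μ₃))) :
    ((1 + μ₁) * (1 + μ₂) - (1 + μ₃) * (1 + η)) ^ 2 ≥
      (1 / 2) * (μ₁ ^ 2 + μ₂ ^ 2 + μ₃ ^ 2) := by
  have ht : 0 ≤ η ^ 2 + 2 * η := by positivity
  have hημ₁ : η ≤ μ₁ := le_of_sq_add_two_mul_le hμ₁ <|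
    le_of_mul_eq_add_mul hc₁ (by positivity : 0 ≤ c₂ + c₃) ht (by linear_combination e1 + e2)
  have hημ₂ : η ≤ μ₂ := le_of_sq_add_two_mul_le hμ₂ <|
    le_of_mul_eq_add_mul hc₂ (by positivity : 0 ≤ c₁ + c₃) ht (by linear_combination e2)
  have hημ₃ : η ≤ -μ₃ := by
    refine le_of_sq_add_two_mul_le (by linarith) ?_
    have := le_of_mul_eq_add_mul (x := -(μ₃ ^ 2 + 2 * μ₃)) hc₃ (by positivity : 0 ≤ c₁ + c₂) ht
      (by linear_combination -e3)
    nlinarith [sq_nonneg μ₃]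
  have hsum : (μ₁ - η) + μ₂ + (-μ₃) ≤ (1 + μ₁) * (1 + μ₂) - (1 + μ₃) * (1 + η) :=
    sub_add_add_le_mul_sub_mul (h4.trans hημ₁) (h4.trans hημ₂) h3 h4
  calc (1 / 2) * (μ₁ ^ 2 + μ₂ ^ 2 + μ₃ ^ 2) ≤ ((μ₁ - η) + μ₂ + (-μ₃)) ^ 2 := by
        linarith [sq_add_sq_add_sq_le_two_mul_sq h4 hημ₁ hημ₂ hημ₃]
    _ ≤ _ := pow_le_pow_left₀ (by linarith) hsum 2

theorem finite_dim_ineq_case1 (μ₁ μ₂ μ₃ η c₁ c₂ c₃ : ℝ)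
    (hμ₁ : -1 ≤ μ₁) (hμ₂ : -1 ≤ μ₂) (hμ₃ : -1 ≤ μ₃) (hη : -1 ≤ η)
    (h1 : 0 ≤ μ₁) (h2 : 0 ≤ μ₂) (h4 : 0 ≤ η) (h3 : μ₃ ≤ 0)
    (hc₁ : 0 < c₁) (hc₂ : 0 < c₂) (hc₃ : 0 < c₃)
    (e1 : c₁ * (μ₁ ^ 2 + 2 * μ₁) = c₂ * (μ₂ ^ 2 + 2 * μ₂))
    (e2 : c₂ * (μ₂ ^ 2 + 2 * μ₂) = (c₁ + c₂ + c₃) * (η ^ 2 + 2 * η))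
    (e3 : (c₁ + c₂ + c₃) * (η ^ 2 + 2 * η) = -(c₃ * (μ₃ ^ 2 + 2 * μ₃))) :
    ((1 + μ₁) * (1 + μ₂) - (1 + μ₃) * (1 + η)) ^ 2 ≥
      (1 / 2) * (μ₁ ^ 2 + μ₂ ^ 2 + μ₃ ^ 2) :=
  finite_dim_ineq_case1_general μ₁ μ₂ μ₃ η c₁ c₂ c₃ hμ₁ hμ₂ h4 h3 hc₁ hc₂ hc₃ e1 e2 e3
end

section
/- Let c₁∞, c₂∞, c₃∞ > 0 with c∞ = c₁∞ + c₂∞ + c₃∞ and c₁∞ c₂∞ = c₃∞ c∞. Let c̄₁, c̄₂, c̄₃ ≥ 0 and c̄ ≥ 0 satisfy c̄₁ + c̄₃ = c₁∞ + c₃∞, c̄₂ + c̄₃ = c₂∞ + c₃∞, c̄₁ + c̄₂ + c̄₃ = c̄, and c̄ᵢ ≤ K for i = 1,2,3 for some K > 0. Then there exists a constant C₀ > 0 depending only on c₁∞, c₂∞, c₃∞ and K such that (√c̄₁ √c̄₂ − √c̄₃ √c̄)² ≥ C₀ Σ_{i=1}^3 (√c̄ᵢ − √cᵢ∞)². -/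
/-!
Conservation of `A₁ + A₃` and `A₂ + A₃` leaves one degree of freedom, the deviation
`δ = c̄₃ - c₃∞`, and every `c̄ᵢ` (also `c̄`) differs from its equilibrium value by `±δ`.
Under the equilibrium relation the mass-action defect factors as
`c̄₁ c̄₂ - c̄₃ c̄ = -2 δ (c̄₁ + c₂∞)`, so it is at least `2 |δ| c₂∞` in size. Dividing by
`√c̄₁ √c̄₂ + √c̄₃ √c̄ ≤ 2√2 K` bounds `δ²` by the left-hand side, while
`(√a - √b)² ≤ (a - b)² / b` bounds each term of the right-hand side by `δ² / cᵢ∞`.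
-/

open Real

lemma sq_sqrt_sub_sqrt_le {a b : ℝ} (ha : 0 ≤ a) (hb : 0 < b) :
    (√a - √b) ^ 2 ≤ (a - b) ^ 2 / b := by
  rw [le_div_iff₀ hb]
  have hdiff : (√a - √b) * (√a + √b) = a - b := by
    rw [show (√a - √b) * (√a + √b) = √a ^ 2 - √b ^ 2 by ring, sq_sqrt ha, sq_sqrt hb.le]
  have hsum : b ≤ (√a + √b) ^ 2 := by
    nlinarith [sq_sqrt hb.le, sqrt_nonneg a, sqrt_nonneg b]
  calc (√a - √b) ^ 2 * b ≤ (√a - √b) ^ 2 * (√a + √b) ^ 2 := by gcongr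
    _ = (a - b) ^ 2 := by rw [← hdiff]; ring

lemma sq_mul_sub_mul_le {a b c d : ℝ} (ha : 0 ≤ a) (hb : 0 ≤ b) (hc : 0 ≤ c) (hd : 0 ≤ d) :
    (a * b - c * d) ^ 2 ≤ (√a * √b - √c * √d) ^ 2 * (2 * (a * b + c * d)) := by
  have hx : (√a * √b) ^ 2 = a * b := by rw [mul_pow, sq_sqrt ha, sq_sqrt hb]
  have hy : (√c * √d) ^ 2 = c * d := by rw [mul_pow, sq_sqrt hc, sq_sqrt hd]
  rw [← hx, ← hy]
  generalize √a * √b = x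
  generalize √c * √d = y
  calc (x ^ 2 - y ^ 2) ^ 2 = (x - y) ^ 2 * (x + y) ^ 2 := by ring
    _ ≤ (x - y) ^ 2 * (2 * (x ^ 2 + y ^ 2)) := by
      gcongr
      nlinarith [sq_nonneg (x - y)]

section ReversibleReaction

variable {c1i c2i c3i c1 c2 c3 c : ℝ}

lemma mul_sub_mul_eq_of_conservation (heq : c1i * c2i = c3i * (c1i + c2i + c3i))
    (h13 : c1 + c3 = c1i + c3i) (h23 : c2 + c3 = c2i + c3i) (hsum : c1 + c2 + c3 = c) :
    c1 * c2 - c3 * c = -2 * (c3 - c3i) * (c1 + c2i) := by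
  obtain rfl : c1 = c1i + c3i - c3 := by linarith
  obtain rfl : c2 = c2i + c3i - c3 := by linarith
  subst hsum
  linear_combination heq

lemma four_mul_sq_mul_sq_le_sq_mul_sub_mul (hc2i : 0 ≤ c2i) (hc1 : 0 ≤ c1)
    (heq : c1i * c2i = c3i * (c1i + c2i + c3i))
    (h13 : c1 + c3 = c1i + c3i) (h23 : c2 + c3 = c2i + c3i) (hsum : c1 + c2 + c3 = c) :
    4 * (c3 - c3i) ^ 2 * c2i ^ 2 ≤ (c1 * c2 - c3 * c) ^ 2 := by
  rw [mul_sub_mul_eq_of_conservation heq h13 h23 hsum]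
  have : c2i ^ 2 ≤ (c1 + c2i) ^ 2 := by gcongr; linarith
  nlinarith [sq_nonneg (c3 - c3i)]

lemma sq_sub_le_mul_sq_sqrt_mul_sub {K : ℝ} (hc2i : 0 < c2i)
    (heq : c1i * c2i = c3i * (c1i + c2i + c3i))
    (hc1 : 0 ≤ c1) (hc2 : 0 ≤ c2) (hc3 : 0 ≤ c3) (hc : 0 ≤ c)
    (h13 : c1 + c3 = c1i + c3i) (h23 : c2 + c3 = c2i + c3i) (hsum : c1 + c2 + c3 = c)
    (hK1 : c1 ≤ K) (hK2 : c2 ≤ K) (hK3 : c3 ≤ K) :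
    (c3 - c3i) ^ 2 ≤ 2 * K ^ 2 / c2i ^ 2 * (√c1 * √c2 - √c3 * √c) ^ 2 := by
  have hbound : c1 * c2 + c3 * c ≤ 4 * K ^ 2 := by
    have : c3 * c ≤ K * (3 * K) := mul_le_mul hK3 (by linarith) hc (by linarith)
    nlinarith [mul_le_mul hK1 hK2 hc2 (by linarith)]
  rw [div_mul_eq_mul_div, le_div_iff₀ (by positivity)]
  calc (c3 - c3i) ^ 2 * c2i ^ 2 ≤ (c1 * c2 - c3 * c) ^ 2 / 4 := by
        linarith [four_mul_sq_mul_sq_le_sq_mul_sub_mul hc2i.le hc1 heq h13 h23 hsum]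
    _ ≤ (√c1 * √c2 - √c3 * √c) ^ 2 * (2 * (c1 * c2 + c3 * c)) / 4 := by
        gcongr; exact sq_mul_sub_mul_le hc1 hc2 hc3 hc
    _ ≤ (√c1 * √c2 - √c3 * √c) ^ 2 * (2 * (4 * K ^ 2)) / 4 := by gcongr
    _ = 2 * K ^ 2 * (√c1 * √c2 - √c3 * √c) ^ 2 := by ring

lemma sum_sq_sqrt_sub_le (h1 : 0 < c1i) (h2 : 0 < c2i) (h3 : 0 < c3i)
    (hc1 : 0 ≤ c1) (hc2 : 0 ≤ c2) (hc3 : 0 ≤ c3)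
    (h13 : c1 + c3 = c1i + c3i) (h23 : c2 + c3 = c2i + c3i) :
    (√c1 - √c1i) ^ 2 + (√c2 - √c2i) ^ 2 + (√c3 - √c3i) ^ 2 ≤
      (c1i⁻¹ + c2i⁻¹ + c3i⁻¹) * (c3 - c3i) ^ 2 := by
  have e1 : (c1 - c1i) ^ 2 = (c3 - c3i) ^ 2 := by rw [show c1 - c1i = c3i - c3 by linarith]; ring
  have e2 : (c2 - c2i) ^ 2 = (c3 - c3i) ^ 2 := by rw [show c2 - c2i = c3i - c3 by linarith]; ring
  calc (√c1 - √c1i) ^ 2 + (√c2 - √c2i) ^ 2 + (√c3 - √c3i) ^ 2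
      ≤ (c1 - c1i) ^ 2 / c1i + (c2 - c2i) ^ 2 / c2i + (c3 - c3i) ^ 2 / c3i := by
        gcongr ?_ + ?_ + ?_
        · exact sq_sqrt_sub_sqrt_le hc1 h1
        · exact sq_sqrt_sub_sqrt_le hc2 h2
        · exact sq_sqrt_sub_sqrt_le hc3 h3
    _ = (c1i⁻¹ + c2i⁻¹ + c3i⁻¹) * (c3 - c3i) ^ 2 := by rw [e1, e2]; ring

end ReversibleReaction

theorem constructive_finite_dim_ineq (c1i c2i c3i K : ℝ)
    (h1 : 0 < c1i) (h2 : 0 < c2i) (h3 : 0 < c3i) (hK : 0 < K)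
    (heq : c1i * c2i = c3i * (c1i + c2i + c3i)) :
    ∃ C₀ > 0, ∀ c1 c2 c3 c : ℝ,
      0 ≤ c1 → 0 ≤ c2 → 0 ≤ c3 → 0 ≤ c →
      c1 + c3 = c1i + c3i → c2 + c3 = c2i + c3i → c1 + c2 + c3 = c →
      c1 ≤ K → c2 ≤ K → c3 ≤ K →
      (Real.sqrt c1 * Real.sqrt c2 - Real.sqrt c3 * Real.sqrt c) ^ 2 ≥
        C₀ * ((Real.sqrt c1 - Real.sqrt c1i) ^ 2 + (Real.sqrt c2 - Real.sqrt c2i) ^ 2 +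
          (Real.sqrt c3 - Real.sqrt c3i) ^ 2) := by
  set S := c1i⁻¹ + c2i⁻¹ + c3i⁻¹
  set B := 2 * K ^ 2 / c2i ^ 2
  have hSB : 0 < S * B := by positivity
  refine ⟨(S * B)⁻¹, inv_pos.mpr hSB, ?_⟩
  intro c1 c2 c3 c hc1 hc2 hc3 hc h13 h23 hsum hK1 hK2 hK3
  have hdist := sum_sq_sqrt_sub_le h1 h2 h3 hc1 hc2 hc3 h13 h23
  have hdev := sq_sub_le_mul_sq_sqrt_mul_sub h2 heq hc1 hc2 hc3 hc h13 h23 hsum hK1 hK2 hK3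
  calc (S * B)⁻¹ * ((√c1 - √c1i) ^ 2 + (√c2 - √c2i) ^ 2 + (√c3 - √c3i) ^ 2)
      ≤ (S * B)⁻¹ * (S * (B * (√c1 * √c2 - √c3 * √c) ^ 2)) := by
        gcongr
        exact hdist.trans (by gcongr)
    _ = (√c1 * √c2 - √c3 * √c) ^ 2 := by rw [← mul_assoc S, inv_mul_cancel_left₀ hSB.ne']
end

section
/- Let x∞ ∈ (0,∞)ⁿ be a complex-balanced equilibrium of a reaction network with reactions (y_a → y'_a, k^a), a = 1,…,N. Then a vector x* ∈ (0,∞)ⁿ is a complex-balanced equilibrium of the same network if and only if x*^{y_a} / x*^{y'_a} = x∞^{y_a} / x∞^{y'_a} for all a = 1,…,N. -/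
open Classical in
/-- `x` is a complex-balanced equilibrium of the network with reactions
`(y a → y' a, k a)`: for every complex `c`, the total inflow balances the
total outflow. -/
noncomputable def IsComplexBalanced (n N : ℕ) (y y' : Fin N → Fin n → ℝ)
    (k : Fin N → ℝ) (x : Fin n → ℝ) : Prop :=
  ∀ c : Fin n → ℝ,
    ∑ a ∈ Finset.univ.filter (fun a => y a = c), k a * ∏ i, x i ^ y a i =
    ∑ b ∈ Finset.univ.filter (fun b => y' b = c), k b * ∏ i, x i ^ y b i

/-! Write `x* = x∞ · e^μ` coordinatewise. Then `x*^c = x∞^c · e^{⟨c, μ⟩}`, so the ratio condition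
says `⟨y_a, μ⟩ = ⟨y'_a, μ⟩` for every reaction, and under it complex balance at `x∞` rescales to
complex balance at `x*`. Conversely, put `w_a = k^a x∞^{y_a}`, `A_a = ⟨y_a, μ⟩`, `B_a = ⟨y'_a, μ⟩`.
Complex balance at `x∞` gives `∑ w_a e^{B_a} = ∑ w_a e^{A_a}`, and complex balance at `x*` gives
`∑ w_a e^{A_a} (B_a - A_a) = 0`. Hence the entropy dissipation
`∑ w_a (e^{B_a} - e^{A_a} - e^{A_a} (B_a - A_a))` vanishes; each term is nonnegative by convexity
of `exp`, and zero only when `A_a = B_a`. -/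

open Real Finset

lemma Real.exp_add_exp_mul_sub_lt_exp {a b : ℝ} (h : a ≠ b) :
    exp a + exp a * (b - a) < exp b := by
  have := mul_lt_mul_of_pos_left (add_one_lt_exp (sub_ne_zero.mpr h.symm)) (exp_pos a)
  rw [← exp_add, add_sub_cancel] at this
  linarith

lemma Real.exp_add_exp_mul_sub_le_exp (a b : ℝ) : exp a + exp a * (b - a) ≤ exp b := by
  rcases eq_or_ne a b with rfl | h
  · simp
  · exact (exp_add_exp_mul_sub_lt_exp h).le

lemma Real.eq_of_sum_mul_exp_eq_of_sum_mul_exp_mul_sub_eq_zero {ι : Type*} [Fintype ι]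
    {w A B : ι → ℝ} (hw : ∀ i, 0 < w i)
    (hexp : ∑ i, w i * exp (B i) = ∑ i, w i * exp (A i))
    (hlin : ∑ i, w i * exp (A i) * (B i - A i) = 0) : A = B := by
  have hgap : ∑ i, w i * (exp (B i) - exp (A i) - exp (A i) * (B i - A i)) = 0 :=
    calc _ = ∑ i, w i * exp (B i) - ∑ i, w i * exp (A i) - ∑ i, w i * exp (A i) * (B i - A i) := by
          rw [← sum_sub_distrib, ← sum_sub_distrib]
          exact sum_congr rfl fun i _ => by ring
      _ = 0 := by rw [hexp, hlin]; ring
  have hgap_nonneg : ∀ i ∈ univ, 0 ≤ w i * (exp (B i) - exp (A i) - exp (A i) * (B i - A i)) :=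
    fun i _ => mul_nonneg (hw i).le (by linarith [exp_add_exp_mul_sub_le_exp (A i) (B i)])
  funext i
  by_contra hne
  have hpos := mul_pos (hw i) (sub_pos.mpr (exp_add_exp_mul_sub_lt_exp hne))
  have hzero := (sum_eq_zero_iff_of_nonneg hgap_nonneg).mp hgap i (mem_univ i)
  linarith

lemma Finset.sum_mul_comp_eq_sum_fiberwise {ι κ R : Type*} [DecidableEq κ]
    [NonUnitalNonAssocSemiring R]
    {s : Finset ι} {t : Finset κ} {φ : ι → κ} (h : ∀ a ∈ s, φ a ∈ t) (F : ι → R) (g : κ → R) :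
    ∑ a ∈ s, F a * g (φ a) = ∑ c ∈ t, (∑ a ∈ s with φ a = c, F a) * g c := by
  rw [← sum_fiberwise_of_maps_to h]
  refine sum_congr rfl fun c _ => ?_
  rw [sum_mul]
  exact sum_congr rfl fun a ha => by rw [(mem_filter.mp ha).2]

lemma prod_mul_exp_rpow {ι : Type*} [Fintype ι] {x : ι → ℝ} (hx : ∀ i, 0 ≤ x i) (μ c : ι → ℝ) :
    ∏ i, (x i * exp (μ i)) ^ c i = (∏ i, x i ^ c i) * exp (∑ i, c i * μ i) := by
  simp only [mul_rpow (hx _) (exp_pos _).le, ← exp_mul, prod_mul_distrib, exp_sum, mul_comm]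

lemma div_prod_mul_exp_rpow_eq_iff {ι : Type*} [Fintype ι] {x : ι → ℝ} (hx : ∀ i, 0 < x i)
    (μ c c' : ι → ℝ) :
    (∏ i, (x i * exp (μ i)) ^ c i) / (∏ i, (x i * exp (μ i)) ^ c' i) =
        (∏ i, x i ^ c i) / (∏ i, x i ^ c' i) ↔ ∑ i, c i * μ i = ∑ i, c' i * μ i := by
  have hprod : ∀ d : ι → ℝ, ∏ i, x i ^ d i ≠ 0 :=
    fun d => (prod_pos fun i _ => rpow_pos_of_pos (hx i) _).ne'
  rw [prod_mul_exp_rpow (fun i => (hx i).le), prod_mul_exp_rpow (fun i => (hx i).le),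
    mul_div_mul_comm, mul_eq_left₀ (div_ne_zero (hprod c) (hprod c')),
    div_eq_one_iff_eq (exp_pos _).ne', exp_eq_exp]

namespace IsComplexBalanced

variable {n N : ℕ} {y y' : Fin N → Fin n → ℝ} {k : Fin N → ℝ} {x : Fin n → ℝ}

open Classical in
lemma sum_flux_mul_product_eq_sum_flux_mul_reactant (hcb : IsComplexBalanced n N y y' k x)
    (g : (Fin n → ℝ) → ℝ) :
    ∑ a, k a * (∏ i, x i ^ y a i) * g (y' a) = ∑ a, k a * (∏ i, x i ^ y a i) * g (y a) := by
  let C := univ.image y ∪ univ.image y'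
  rw [sum_mul_comp_eq_sum_fiberwise (φ := y') (t := C)
      fun a _ => mem_union_right _ (mem_image_of_mem _ (mem_univ a)),
    sum_mul_comp_eq_sum_fiberwise (φ := y) (t := C)
      fun a _ => mem_union_left _ (mem_image_of_mem _ (mem_univ a))]
  exact sum_congr rfl fun c _ => by rw [hcb c]

lemma mul_exp (hcb : IsComplexBalanced n N y y' k x) (hx : ∀ i, 0 ≤ x i) {μ : Fin n → ℝ}
    (hμ : ∀ a, ∑ i, y a i * μ i = ∑ i, y' a i * μ i) :
    IsComplexBalanced n N y y' k (fun i => x i * exp (μ i)) := by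
  intro c
  have hscale : ∀ a, y a = c ∨ y' a = c → k a * ∏ i, (x i * exp (μ i)) ^ y a i =
      k a * (∏ i, x i ^ y a i) * exp (∑ i, c i * μ i) := by
    intro a ha
    rw [prod_mul_exp_rpow hx, ← mul_assoc]
    rcases ha with rfl | rfl
    · rfl
    · rw [hμ a]
  rw [sum_congr rfl fun a ha => hscale a (.inl (mem_filter.mp ha).2),
    sum_congr rfl fun a ha => hscale a (.inr (mem_filter.mp ha).2), ← sum_mul, ← sum_mul, hcb c]

lemma dot_eq_of_mul_exp (hcb : IsComplexBalanced n N y y' k x) (hk : ∀ a, 0 < k a)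
    (hx : ∀ i, 0 < x i) {μ : Fin n → ℝ}
    (hcbμ : IsComplexBalanced n N y y' k (fun i => x i * exp (μ i))) :
    ∀ a, ∑ i, y a i * μ i = ∑ i, y' a i * μ i := by
  have hexp := hcb.sum_flux_mul_product_eq_sum_flux_mul_reactant fun c => exp (∑ i, c i * μ i)
  have hlin := hcbμ.sum_flux_mul_product_eq_sum_flux_mul_reactant fun c => ∑ i, c i * μ i
  simp only [prod_mul_exp_rpow fun i => (hx i).le] at hlin
  have hAB := eq_of_sum_mul_exp_eq_of_sum_mul_exp_mul_sub_eq_zero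
    (w := fun a => k a * ∏ i, x i ^ y a i)
    (fun a => mul_pos (hk a) (prod_pos fun i _ => rpow_pos_of_pos (hx i) _)) hexp
    (by rw [← sub_eq_zero.mpr hlin, ← sum_sub_distrib]; exact sum_congr rfl fun a _ => by ring)
  exact congrFun hAB

end IsComplexBalanced

theorem complex_balanced_characterization_general (n N : ℕ) (y y' : Fin N → Fin n → ℝ)
    (k : Fin N → ℝ) (hk : ∀ a, 0 < k a)
    (xinf : Fin n → ℝ) (hxinf : ∀ i, 0 < xinf i)
    (hcb : IsComplexBalanced n N y y' k xinf)
    (xs : Fin n → ℝ) (hxs : ∀ i, 0 < xs i) :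
    IsComplexBalanced n N y y' k xs ↔
      ∀ a, (∏ i, xs i ^ y a i) / (∏ i, xs i ^ y' a i) =
        (∏ i, xinf i ^ y a i) / (∏ i, xinf i ^ y' a i) := by
  obtain ⟨μ, rfl⟩ : ∃ μ : Fin n → ℝ, xs = fun i => xinf i * exp (μ i) :=
    ⟨fun i => log (xs i / xinf i), funext fun i => by
      rw [exp_log (div_pos (hxs i) (hxinf i)), mul_div_cancel₀ _ (hxinf i).ne']⟩
  simp only [div_prod_mul_exp_rpow_eq_iff hxinf]
  exact ⟨hcb.dot_eq_of_mul_exp hk hxinf, hcb.mul_exp fun i => (hxinf i).le⟩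

theorem complex_balanced_characterization (n N : ℕ) (y y' : Fin N → Fin n → ℝ)
    (hy : ∀ a i, 0 ≤ y a i) (hy' : ∀ a i, 0 ≤ y' a i)
    (k : Fin N → ℝ) (hk : ∀ a, 0 < k a)
    (xinf : Fin n → ℝ) (hxinf : ∀ i, 0 < xinf i)
    (hcb : IsComplexBalanced n N y y' k xinf)
    (xs : Fin n → ℝ) (hxs : ∀ i, 0 < xs i) :
    IsComplexBalanced n N y y' k xs ↔
      ∀ a, (∏ i, xs i ^ y a i) / (∏ i, xs i ^ y' a i) =
        (∏ i, xinf i ^ y a i) / (∏ i, xinf i ^ y' a i) :=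
  complex_balanced_characterization_general n N y y' k hk xinf hxinf hcb xs hxs
end
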